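/- arXiv:2412.06731 — 2 statements merged into one kernel-verified Lean document; each statement's English description precedes it below -/
import Mathlib

section
/- Let f be L-smooth convex with minimizer x_⋆ and x₀ ∈ ℝ^d. Suppose z is an auxiliary vector for x with pre-rate τ > 0, i.e., f(x)⁺ − f(x_⋆) + (L/(2τ))‖z−x_⋆‖² ≤ (L/(2τ))‖x₀−x_⋆‖². Let δ = 1 + √(1+2τ), τ' = τ + δ, x' = (τ/τ')x⁺ + (δ/τ')z, and z' = z − (δ/L)∇f(x'). Then z' is an auxiliary vector for x' with pre-rate τ', i.e., f(x')⁺ − f(x_⋆) + (L/(2τ'))‖z'−x_⋆‖² ≤ (L/(2τ'))‖x₀−x_⋆‖². -/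
/-! With `x⁺ = x - ∇f(x)/L` and `f(x)⁺ = f(x) - ‖∇f(x)‖²/(2L)`, convexity and `L`-smoothness give
the interpolation inequality `f(u)⁺ + ⟪∇f(u), v⁺ - u⁺⟫ ≤ f(v)⁺` for all `u, v`. Adding it at
`(u, v) = (x', x)` with weight `τ` and at `(x', x_⋆)` with weight `δ` (where `x_⋆⁺ = x_⋆` and
`f(x_⋆)⁺ = f(x_⋆)` since `∇f(x_⋆) = 0`) to the expansion of `‖z' - x_⋆‖²`, all inner products
cancel because `τ' x' = τ x⁺ + δ z`, and the `‖∇f(x')‖²` terms cancel because `δ² = 2τ'`. Hence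
`τ'(f(x')⁺ - f(x_⋆)) + (L/2)‖z' - x_⋆‖²` does not exceed the same quantity for `(τ, x, z)`,
which is the pre-rate bound after scaling by `L/(2τ)`. -/

open Set
open scoped RealInnerProductSpace

variable {E : Type*} [NormedAddCommGroup E] [InnerProductSpace ℝ E]

-- `x⁺` and `f(x)⁺` of the paper.
noncomputable def gradStep (L : ℝ) (f' : E → E) (x : E) : E := x - (1 / L) • f' x

noncomputable def gradStepValue (L : ℝ) (f : E → ℝ) (f' : E → E) (x : E) : ℝ :=
  f x - 1 / (2 * L) * ‖f' x‖ ^ 2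

section Smooth

variable [CompleteSpace E] {f : E → ℝ} {f' : E → E} {L : ℝ}

theorem IsLocalMin.hasGradientAt_eq_zero {a g : E} (h : IsLocalMin f a)
    (hf : HasGradientAt f g a) : g = 0 := by
  simpa using h.hasFDerivAt_eq_zero hf.hasFDerivAt

theorem HasGradientAt.hasDerivAt_add_smul {g y v : E} {t : ℝ}
    (hf : HasGradientAt f g (y + t • v)) :
    HasDerivAt (fun s : ℝ => f (y + s • v)) ⟪g, v⟫ t := by
  have hline : HasDerivAt (fun s : ℝ => y + s • v) v t := by
    simpa using ((hasDerivAt_id t).smul_const v).const_add y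
  exact hf.hasFDerivAt.comp_hasDerivAt t hline

theorem ConvexOn.add_inner_le_of_hasGradientAt {g u : E} (hconv : ConvexOn ℝ univ f)
    (hf : HasGradientAt f g u) (y : E) : f u + ⟪g, y - u⟫ ≤ f y := by
  have hline : ConvexOn ℝ univ (fun t : ℝ => f (u + t • (y - u))) := by
    have hcomp : (fun t : ℝ => f (u + t • (y - u))) = f ∘ AffineMap.lineMap u y := by
      ext t
      simp [AffineMap.lineMap_apply_module', add_comm]
    simpa [hcomp] using hconv.comp_affineMap (AffineMap.lineMap u y)
  have hderiv : HasDerivAt (fun t : ℝ => f (u + t • (y - u))) ⟪g, y - u⟫ 0 :=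
    HasGradientAt.hasDerivAt_add_smul (by simpa using hf)
  have hslope := hline.le_slope_of_hasDerivAt (mem_univ 0) (mem_univ 1) one_pos hderiv
  simp only [slope_def_field, one_smul, add_sub_cancel, zero_smul, add_zero, sub_zero,
    div_one] at hslope
  linarith

theorem le_add_inner_add_sq_of_lipschitz_gradient (hf : ∀ y, HasGradientAt f (f' y) y)
    (hlip : ∀ y w, ‖f' y - f' w‖ ≤ L * ‖y - w‖) (y w : E) :
    f w ≤ f y + ⟪f' y, w - y⟫ + L / 2 * ‖w - y‖ ^ 2 := by
  set v := w - y
  set φ : ℝ → ℝ := fun t => f (y + t • v) - t * ⟪f' y, v⟫ - L / 2 * t ^ 2 * ‖v‖ ^ 2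
  have hφ : ∀ t, HasDerivAt φ (⟪f' (y + t • v) - f' y, v⟫ - L * t * ‖v‖ ^ 2) t := by
    intro t
    have := (((hf (y + t • v)).hasDerivAt_add_smul).sub
      ((hasDerivAt_id t).mul_const ⟪f' y, v⟫)).sub
      (((hasDerivAt_pow 2 t).const_mul (L / 2)).mul_const (‖v‖ ^ 2))
    refine this.congr_deriv ?_
    rw [inner_sub_left]
    simp only [Nat.add_one_sub_one, pow_one, Nat.cast_ofNat]
    ring
  have hφ_anti : AntitoneOn φ (Icc 0 1) := by
    refine antitoneOn_of_hasDerivWithinAt_nonpos (convex_Icc 0 1)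
      (fun t _ => (hφ t).continuousAt.continuousWithinAt) (fun t _ => (hφ t).hasDerivWithinAt) ?_
    intro t ht
    rw [interior_Icc] at ht
    have hgrad : ‖f' (y + t • v) - f' y‖ ≤ L * (t * ‖v‖) := by
      simpa [norm_smul, abs_of_pos ht.1] using hlip (y + t • v) y
    nlinarith [real_inner_le_norm (f' (y + t • v) - f' y) v, norm_nonneg v]
  have h01 := hφ_anti (left_mem_Icc.mpr zero_le_one) (right_mem_Icc.mpr zero_le_one) zero_le_one
  simp only [φ, v, one_smul, add_sub_cancel, one_mul, one_pow, mul_one, zero_smul, add_zero,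
    zero_mul, sub_zero, ne_eq, OfNat.ofNat_ne_zero, not_false_eq_true, zero_pow, mul_zero,
    tsub_le_iff_right] at h01
  linarith

theorem add_inner_add_sq_le_of_lipschitz_gradient (hL : 0 < L) (hconv : ConvexOn ℝ univ f)
    (hf : ∀ y, HasGradientAt f (f' y) y) (hlip : ∀ y w, ‖f' y - f' w‖ ≤ L * ‖y - w‖) (u v : E) :
    f u + ⟪f' u, v - u⟫ + 1 / (2 * L) * ‖f' v - f' u‖ ^ 2 ≤ f v := by
  set g := f' v - f' u
  set w := v - (1 / L) • g
  have hconvex := hconv.add_inner_le_of_hasGradientAt (hf u) w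
  have hdescent := le_add_inner_add_sq_of_lipschitz_gradient hf hlip v w
  have hwu : w - u = (v - u) - (1 / L) • g := by simp only [w]; abel
  have hwv : w - v = -((1 / L) • g) := by simp only [w]; abel
  rw [hwu, inner_sub_right, real_inner_smul_right] at hconvex
  rw [hwv, inner_neg_right, real_inner_smul_right, norm_neg, norm_smul, Real.norm_eq_abs,
    abs_of_pos (one_div_pos.mpr hL)] at hdescent
  have hgg : ⟪f' v, g⟫ - ⟪f' u, g⟫ = ‖g‖ ^ 2 := by
    rw [← inner_sub_left, real_inner_self_eq_norm_sq]
  have hquad : L / 2 * (1 / L * ‖g‖) ^ 2 = 1 / (2 * L) * ‖g‖ ^ 2 := by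
    field_simp
  have hcross : 1 / L * ⟪f' v, g⟫ - 1 / L * ⟪f' u, g⟫ = 2 * (1 / (2 * L) * ‖g‖ ^ 2) := by
    rw [← mul_sub, hgg]
    field_simp
  linarith

theorem gradStepValue_add_inner_le (hL : 0 < L) (hconv : ConvexOn ℝ univ f)
    (hf : ∀ y, HasGradientAt f (f' y) y) (hlip : ∀ y w, ‖f' y - f' w‖ ≤ L * ‖y - w‖) (u v : E) :
    gradStepValue L f f' u + ⟪f' u, gradStep L f' v - gradStep L f' u⟫
      ≤ gradStepValue L f f' v := by
  have h := add_inner_add_sq_le_of_lipschitz_gradient hL hconv hf hlip u v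
  have hsteps : gradStep L f' v - gradStep L f' u = (v - u) - (1 / L) • (f' v - f' u) := by
    simp only [gradStep, smul_sub]
    abel
  rw [hsteps, inner_sub_right, real_inner_smul_right]
  rw [norm_sub_sq_real, real_inner_comm (f' u) (f' v)] at h
  simp only [gradStepValue, inner_sub_right, real_inner_self_eq_norm_sq] at h ⊢
  field_simp at h ⊢
  linarith

end Smooth

theorem ogm_potential_step_le {f : E → ℝ} {f' : E → E} {L τ δ : ℝ} {x z x' z' xstar : E}
    (hL : L ≠ 0) (hτ : 0 ≤ τ) (hδ : 0 < δ) (hδ_sq : δ ^ 2 = 2 * (τ + δ))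
    (hx' : x' = (τ / (τ + δ)) • gradStep L f' x + (δ / (τ + δ)) • z)
    (hz' : z' = z - (δ / L) • f' x')
    (hA : gradStepValue L f f' x' + ⟪f' x', gradStep L f' x - gradStep L f' x'⟫
      ≤ gradStepValue L f f' x)
    (hB : gradStepValue L f f' x' + ⟪f' x', xstar - gradStep L f' x'⟫ ≤ f xstar) :
    (τ + δ) * (gradStepValue L f f' x' - f xstar) + L / 2 * ‖z' - xstar‖ ^ 2
      ≤ τ * (gradStepValue L f f' x - f xstar) + L / 2 * ‖z - xstar‖ ^ 2 := by
  set g := f' x'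
  have hτδ : τ + δ ≠ 0 := by positivity
  have hx'_scaled : (τ + δ) • x' = τ • gradStep L f' x + δ • z := by
    rw [hx', smul_add, smul_smul, smul_smul, mul_div_cancel₀ _ hτδ, mul_div_cancel₀ _ hτδ]
  have hcomb : τ • (gradStep L f' x - gradStep L f' x') + δ • (xstar - gradStep L f' x')
      + δ • (z - xstar) = ((τ + δ) / L) • g := by
    simp only [gradStep, g] at hx'_scaled ⊢
    linear_combination (norm := module) -hx'_scaled
  have hinner := congrArg (⟪g, ·⟫) hcomb
  simp only [inner_add_right, real_inner_smul_right, real_inner_self_eq_norm_sq] at hinner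
  have hnorm : L / 2 * ‖z' - xstar‖ ^ 2
      = L / 2 * ‖z - xstar‖ ^ 2 - δ * ⟪g, z - xstar⟫ + (τ + δ) / L * ‖g‖ ^ 2 := by
    rw [hz', show z - (δ / L) • g - xstar = (z - xstar) - (δ / L) • g by abel, norm_sub_sq_real,
      real_inner_smul_right, norm_smul, Real.norm_eq_abs, mul_pow, sq_abs, real_inner_comm]
    field_simp
    linear_combination ‖g‖ ^ 2 * hδ_sq
  linarith [mul_le_mul_of_nonneg_left hA hτ, mul_le_mul_of_nonneg_left hB hδ.le]

theorem prerate_le_iff {L τ a b c : ℝ} (hτ : 0 < τ) :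
    a + L / (2 * τ) * b ≤ L / (2 * τ) * c ↔ τ * a + L / 2 * b ≤ L / 2 * c := by
  rw [← mul_le_mul_iff_of_pos_left hτ]
  field_simp

theorem ogm_induction_prerate {d : ℕ} (L : ℝ) (hL : 0 < L)
    (f : EuclideanSpace ℝ (Fin d) → ℝ)
    (f' : EuclideanSpace ℝ (Fin d) → EuclideanSpace ℝ (Fin d))
    (hconv : ConvexOn ℝ Set.univ f)
    (hdiff : ∀ y, HasGradientAt f (f' y) y)
    (hsmooth : ∀ y w, ‖f' y - f' w‖ ≤ L * ‖y - w‖)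
    (xstar : EuclideanSpace ℝ (Fin d)) (hmin : ∀ y, f xstar ≤ f y)
    (x₀ x z : EuclideanSpace ℝ (Fin d)) (τ : ℝ) (hτ : 0 < τ)
    (haux : (f x - (1 / (2 * L)) * ‖f' x‖ ^ 2) - f xstar
              + L / (2 * τ) * ‖z - xstar‖ ^ 2 ≤ L / (2 * τ) * ‖x₀ - xstar‖ ^ 2)
    (δ τ' : ℝ) (hδ : δ = 1 + Real.sqrt (1 + 2 * τ)) (hτ' : τ' = τ + δ)
    (x' z' : EuclideanSpace ℝ (Fin d))
    (hx' : x' = (τ / τ') • (x - (1 / L) • f' x) + (δ / τ') • z)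
    (hz' : z' = z - (δ / L) • f' x') :
    (f x' - (1 / (2 * L)) * ‖f' x'‖ ^ 2) - f xstar
        + L / (2 * τ') * ‖z' - xstar‖ ^ 2 ≤ L / (2 * τ') * ‖x₀ - xstar‖ ^ 2 := by
  subst hτ'
  have hδ_pos : 0 < δ := by rw [hδ]; positivity
  have hδ_sq : δ ^ 2 = 2 * (τ + δ) := by
    rw [hδ]
    nlinarith [Real.sq_sqrt (show 0 ≤ 1 + 2 * τ by linarith)]
  have hgrad_star : f' xstar = 0 :=
    IsLocalMin.hasGradientAt_eq_zero (Filter.Eventually.of_forall hmin) (hdiff xstar)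
  have hA := gradStepValue_add_inner_le hL hconv hdiff hsmooth x' x
  have hB := gradStepValue_add_inner_le hL hconv hdiff hsmooth x' xstar
  have hstep_star : gradStep L f' xstar = xstar := by simp [gradStep, hgrad_star]
  have hvalue_star : gradStepValue L f f' xstar = f xstar := by simp [gradStepValue, hgrad_star]
  rw [hstep_star, hvalue_star] at hB
  rw [prerate_le_iff hτ] at haux
  rw [prerate_le_iff (by linarith)]
  exact (ogm_potential_step_le hL.ne' hτ.le hδ_pos hδ_sq hx' hz' hA hB).trans haux
end

section
/- With the setup of the SPGM lower bound construction, if n ≤ i < j ≤ N then τ_{n,i}(δ_i − 1)η_i ≤ τ_{n,j}(δ_j − 1)η_j and δ_j η_j ≤ (δ_i − 1)η_i. -/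
/-!
Writing `p_i` for `τ_{n,i-1}` (with `p_n = τ_{n-1/2}`), the choice of `δ_i` as a root of
`δ² = 2δ + 2p_i` (resp. `δ² = δ + p_N`) turns the definition of `η` into the recursion
`δ_{i+1} η_{i+1} = (δ_i - 1) η_i`. Since `η > 0`, this makes `δ_i η_i` decreasing, and together
with `p_i δ_i ≤ τ_{n,i} (δ_i - 1)` it makes `τ_{n,i} (δ_i - 1) η_i` increasing.
-/

open Finset Order

lemma one_lt_one_add_sqrt_one_add_two_mul {t : ℝ} (ht : 0 < 1 + 2 * t) :
    1 < 1 + √(1 + 2 * t) := by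
  simpa using Real.sqrt_pos.mpr ht

lemma sq_one_add_sqrt_one_add_two_mul {t : ℝ} (ht : 0 ≤ 1 + 2 * t) :
    (1 + √(1 + 2 * t)) ^ 2 = 2 * (1 + √(1 + 2 * t)) + 2 * t := by
  linear_combination Real.sq_sqrt ht

lemma one_lt_one_add_sqrt_one_add_four_mul_div_two {t : ℝ} (ht : 0 < t) :
    1 < (1 + √(1 + 4 * t)) / 2 := by
  have : 1 < √(1 + 4 * t) := by
    rw [Real.lt_sqrt zero_le_one]
    linarith
  linarith

lemma sq_one_add_sqrt_one_add_four_mul_div_two {t : ℝ} (ht : 0 ≤ 1 + 4 * t) :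
    ((1 + √(1 + 4 * t)) / 2) ^ 2 = (1 + √(1 + 4 * t)) / 2 + t := by
  linear_combination Real.sq_sqrt ht / 4

/-- `τ_{n,i-1}` in the paper's notation, where `τ_{n,n-1}` stands for `τ_{n-1/2}`. -/
def prevTau (n : ℕ) (τhalf : ℝ) (τ : ℕ → ℝ) (i : ℕ) : ℝ :=
  if i = n then τhalf else τ (i - 1)

lemma prevTau_add_one {n i : ℕ} {τhalf : ℝ} {τ : ℕ → ℝ} (hi : n ≤ i) :
    prevTau n τhalf τ (i + 1) = τ i := by
  simp [prevTau, show i + 1 ≠ n by omega]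

structure IsSPGMLowerBoundSeq (N n : ℕ) (τhalf : ℝ) (δ τ η : ℕ → ℝ) : Prop where
  half_pos : 0 < τhalf
  delta_eq : ∀ i, n ≤ i → i ≤ N →
    δ i = if i < N then 1 + Real.sqrt (1 + 2 * prevTau n τhalf τ i)
          else (1 + Real.sqrt (1 + 4 * prevTau n τhalf τ i)) / 2
  tau_eq : ∀ i, n ≤ i → i ≤ N → τ i = prevTau n τhalf τ i + δ i
  eta_base : η n = 1 / (2 * τhalf * δ n)
  eta_eq : ∀ i, n < i → i ≤ N →
    η i = (1 + ∑ j ∈ Ico n i, δ j ^ 2 * η j) / (2 * τ (i - 1) * δ i)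

namespace IsSPGMLowerBoundSeq

variable {N n i : ℕ} {τhalf : ℝ} {δ τ η : ℕ → ℝ}

lemma one_lt_delta_of_prevTau_pos (h : IsSPGMLowerBoundSeq N n τhalf δ τ η) (hi : n ≤ i)
    (hiN : i ≤ N) (hp : 0 < prevTau n τhalf τ i) : 1 < δ i := by
  rw [h.delta_eq i hi hiN]
  split_ifs
  · exact one_lt_one_add_sqrt_one_add_two_mul (by linarith)
  · exact one_lt_one_add_sqrt_one_add_four_mul_div_two hp

lemma prevTau_pos (h : IsSPGMLowerBoundSeq N n τhalf δ τ η) (hi : n ≤ i) (hiN : i ≤ N) :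
    0 < prevTau n τhalf τ i := by
  induction i, hi using Nat.le_induction with
  | base => simpa [prevTau] using h.half_pos
  | succ i hi ih =>
    have hp := ih (by omega)
    rw [prevTau_add_one hi, h.tau_eq i hi (by omega)]
    linarith [h.one_lt_delta_of_prevTau_pos hi (by omega) hp]

lemma one_lt_delta (h : IsSPGMLowerBoundSeq N n τhalf δ τ η) (hi : n ≤ i) (hiN : i ≤ N) :
    1 < δ i :=
  h.one_lt_delta_of_prevTau_pos hi hiN (h.prevTau_pos hi hiN)

lemma tau_pos (h : IsSPGMLowerBoundSeq N n τhalf δ τ η) (hi : n ≤ i) (hiN : i ≤ N) :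
    0 < τ i := by
  rw [h.tau_eq i hi hiN]
  linarith [h.prevTau_pos hi hiN, h.one_lt_delta hi hiN]

lemma sq_delta_of_lt (h : IsSPGMLowerBoundSeq N n τhalf δ τ η) (hi : n ≤ i) (hiN : i < N) :
    δ i ^ 2 = 2 * δ i + 2 * prevTau n τhalf τ i := by
  rw [h.delta_eq i hi hiN.le, if_pos hiN]
  exact sq_one_add_sqrt_one_add_two_mul (by linarith [h.prevTau_pos hi hiN.le])

lemma sq_delta_last (h : IsSPGMLowerBoundSeq N n τhalf δ τ η) (hnN : n ≤ N) :
    δ N ^ 2 = δ N + prevTau n τhalf τ N := by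
  rw [h.delta_eq N hnN le_rfl, if_neg (lt_irrefl N)]
  exact sq_one_add_sqrt_one_add_four_mul_div_two (by linarith [h.prevTau_pos hnN le_rfl])

lemma two_mul_prevTau_mul_delta_mul_eta (h : IsSPGMLowerBoundSeq N n τhalf δ τ η) (hi : n ≤ i)
    (hiN : i ≤ N) :
    2 * prevTau n τhalf τ i * δ i * η i = 1 + ∑ j ∈ Ico n i, δ j ^ 2 * η j := by
  have hp := (h.prevTau_pos hi hiN).ne'
  have hδ := (zero_lt_one.trans (h.one_lt_delta hi hiN)).ne'
  rcases hi.eq_or_lt with rfl | hi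
  · rw [h.eta_base]
    simp only [prevTau, if_pos, Ico_self, sum_empty, add_zero] at hp ⊢
    field_simp
  · rw [h.eta_eq i hi hiN]
    simp only [prevTau, if_neg hi.ne'] at hp ⊢
    field_simp

lemma delta_add_one_mul_eta_add_one (h : IsSPGMLowerBoundSeq N n τhalf δ τ η) (hi : n ≤ i)
    (hiN : i + 1 ≤ N) : δ (i + 1) * η (i + 1) = (δ i - 1) * η i := by
  have hS := h.two_mul_prevTau_mul_delta_mul_eta hi (by omega)
  have hS' := h.two_mul_prevTau_mul_delta_mul_eta (i := i + 1) (by omega) hiN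
  rw [sum_Ico_succ_top hi, ← add_assoc, ← hS, prevTau_add_one hi, h.tau_eq i hi (by omega)] at hS'
  have hδ : δ i ^ 2 ≠ 0 := by positivity [h.one_lt_delta hi (by omega)]
  -- `δ_i² = 2δ_i + 2p_i` gives `2τ_i = δ_i²` and `2p_i + δ_i = δ_i (δ_i - 1)`
  refine mul_left_cancel₀ hδ ?_
  linear_combination (δ (i + 1) * η (i + 1) - δ i * η i) * h.sq_delta_of_lt hi (by omega) + hS'

lemma eta_pos (h : IsSPGMLowerBoundSeq N n τhalf δ τ η) (hi : n ≤ i) (hiN : i ≤ N) :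
    0 < η i := by
  induction i, hi using Nat.le_induction with
  | base =>
    have := h.one_lt_delta le_rfl hiN
    have := h.half_pos
    rw [h.eta_base]
    positivity
  | succ i hi ih =>
    have hδ := h.one_lt_delta hi (by omega)
    have hδ' := h.one_lt_delta (i := i + 1) (by omega) hiN
    have : 0 < δ (i + 1) * η (i + 1) := by
      rw [h.delta_add_one_mul_eta_add_one hi hiN]
      exact mul_pos (by linarith) (ih (by omega))
    exact pos_of_mul_pos_right this (by linarith)

lemma prevTau_mul_delta_le (h : IsSPGMLowerBoundSeq N n τhalf δ τ η) (hi : n ≤ i) (hiN : i ≤ N) :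
    prevTau n τhalf τ i * δ i ≤ τ i * (δ i - 1) := by
  rw [h.tau_eq i hi hiN]
  rcases hiN.lt_or_eq with hiN | rfl
  · nlinarith [h.sq_delta_of_lt hi hiN, h.tau_pos hi hiN.le, h.tau_eq i hi hiN.le]
  · linarith [h.sq_delta_last hi]

lemma antitoneOn_delta_mul_eta (h : IsSPGMLowerBoundSeq N n τhalf δ τ η) :
    AntitoneOn (fun i ↦ δ i * η i) (Set.Icc n N) := by
  refine antitoneOn_of_succ_le Set.ordConnected_Icc fun i _ hi hi' ↦ ?_
  simp only [succ_eq_add_one, Set.mem_Icc] at hi hi' ⊢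
  rw [h.delta_add_one_mul_eta_add_one hi.1 hi'.2]
  nlinarith [h.eta_pos hi.1 hi.2]

lemma monotoneOn_tau_mul_delta_sub_one_mul_eta (h : IsSPGMLowerBoundSeq N n τhalf δ τ η) :
    MonotoneOn (fun i ↦ τ i * (δ i - 1) * η i) (Set.Icc n N) := by
  refine monotoneOn_of_le_succ Set.ordConnected_Icc fun i _ hi hi' ↦ ?_
  simp only [succ_eq_add_one, Set.mem_Icc] at hi hi' ⊢
  calc τ i * (δ i - 1) * η i = prevTau n τhalf τ (i + 1) * δ (i + 1) * η (i + 1) := by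
        rw [prevTau_add_one hi.1, mul_assoc, mul_assoc, h.delta_add_one_mul_eta_add_one hi.1 hi'.2]
    _ ≤ τ (i + 1) * (δ (i + 1) - 1) * η (i + 1) :=
        mul_le_mul_of_nonneg_right (h.prevTau_mul_delta_le (by omega) hi'.2)
          (h.eta_pos (by omega) hi'.2).le

end IsSPGMLowerBoundSeq

theorem eta_monotonicity_general (N n : ℕ) (τhalf : ℝ) (hτ : 0 < τhalf)
    (δ τ η : ℕ → ℝ)
    (hδ : ∀ i, n ≤ i → i ≤ N →
      δ i = if i < N then 1 + Real.sqrt (1 + 2 * (if i = n then τhalf else τ (i - 1)))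
            else (1 + Real.sqrt (1 + 4 * (if i = n then τhalf else τ (i - 1)))) / 2)
    (hτrec : ∀ i, n ≤ i → i ≤ N →
      τ i = (if i = n then τhalf else τ (i - 1)) + δ i)
    (hηn : η n = 1 / (2 * τhalf * δ n))
    (hηi : ∀ i, n < i → i ≤ N →
      η i = (1 + ∑ j ∈ Finset.Ico n i, (δ j) ^ 2 * η j) / (2 * τ (i - 1) * δ i)) :
    ∀ i j, n ≤ i → i < j → j ≤ N →
      τ i * (δ i - 1) * η i ≤ τ j * (δ j - 1) * η j ∧
      δ j * η j ≤ (δ i - 1) * η i := by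
  intro i j hi hij hjN
  have h : IsSPGMLowerBoundSeq N n τhalf δ τ η := ⟨hτ, hδ, hτrec, hηn, hηi⟩
  refine ⟨h.monotoneOn_tau_mul_delta_sub_one_mul_eta ⟨hi, by omega⟩ ⟨by omega, hjN⟩ hij.le, ?_⟩
  rw [← h.delta_add_one_mul_eta_add_one hi (by omega)]
  exact h.antitoneOn_delta_mul_eta ⟨by omega, by omega⟩ ⟨by omega, hjN⟩ hij

theorem eta_monotonicity (N n : ℕ) (hnN : n ≤ N) (τhalf : ℝ) (hτ : 0 < τhalf)
    (δ τ η : ℕ → ℝ)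
    (hδ : ∀ i, n ≤ i → i ≤ N →
      δ i = if i < N then 1 + Real.sqrt (1 + 2 * (if i = n then τhalf else τ (i - 1)))
            else (1 + Real.sqrt (1 + 4 * (if i = n then τhalf else τ (i - 1)))) / 2)
    (hτrec : ∀ i, n ≤ i → i ≤ N →
      τ i = (if i = n then τhalf else τ (i - 1)) + δ i)
    (hηn : η n = 1 / (2 * τhalf * δ n))
    (hηi : ∀ i, n < i → i ≤ N →
      η i = (1 + ∑ j ∈ Finset.Ico n i, (δ j) ^ 2 * η j) / (2 * τ (i - 1) * δ i)) :
    ∀ i j, n ≤ i → i < j → j ≤ N →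
      τ i * (δ i - 1) * η i ≤ τ j * (δ j - 1) * η j ∧
      δ j * η j ≤ (δ i - 1) * η i :=
  eta_monotonicity_general N n τhalf hτ δ τ η hδ hτrec hηn hηi
end
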